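/- Bregman divergence of the contraction equals the KL divergence of the tilted measures: let α, β ∈ ℝ^k, set ν_x = p^{Xᵀα}, ν_y = p^{Xᵀβ}, x = Xν_x and y = Xν_y. Then D_φ(x,y|p) := φ(x|p) − φ(y|p) − βᵀ(x − y) = S(ν_x | ν_y). -/
import Mathlib


open Real

/-- `p` is a positive probability vector on `{1,…,n}`. -/
def IsPPV {n : ℕ} (p : Fin n → ℝ) : Prop := (∀ i, 0 < p i) ∧ (∑ i, p i) = 1

/-- Relative entropy (KL divergence) `S(ν|q) = ∑ i, ν i · log (ν i / q i)`. -/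
noncomputable def relEnt {n : ℕ} (ν q : Fin n → ℝ) : ℝ := ∑ i, ν i * Real.log (ν i / q i)

/-- Free energy `F(μ|p) = log (∑ i, p i · exp (μ i))`. -/
noncomputable def freeEnergy {n : ℕ} (p μ : Fin n → ℝ) : ℝ :=
  Real.log (∑ i, p i * Real.exp (μ i))

/-- Exponentially tilted measure `(p^μ)_i = p i · exp (μ i − F(μ|p))`. -/
noncomputable def tilted {n : ℕ} (p μ : Fin n → ℝ) : Fin n → ℝ :=
  fun i => p i * Real.exp (μ i - freeEnergy p μ)

/-- Contracted rate function `φ(x|p) = inf { S(ν|p) : ν a positive probability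
vector with Xν = x }`. -/
noncomputable def phi {n k : ℕ} (X : Matrix (Fin k) (Fin n) ℝ) (p : Fin n → ℝ)
    (x : Fin k → ℝ) : ℝ :=
  sInf { t : ℝ | ∃ ν : Fin n → ℝ, IsPPV ν ∧ X.mulVec ν = x ∧ t = relEnt ν p }

lemma sum_pos_exp {n : ℕ} (hn : 1 ≤ n) (p μ : Fin n → ℝ) (hp : ∀ i, 0 < p i) :
    0 < ∑ i, p i * Real.exp (μ i) := by
  apply Finset.sum_pos
  · intro i _; exact mul_pos (hp i) (Real.exp_pos _)
  · simpa [Finset.univ_nonempty_iff] using Fin.pos_iff_nonempty.mp hn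

lemma tilted_isPPV {n : ℕ} (hn : 1 ≤ n) (p μ : Fin n → ℝ) (hp : ∀ i, 0 < p i) :
    IsPPV (tilted p μ) := by
  have hs := sum_pos_exp hn p μ hp
  constructor
  · intro i; exact mul_pos (hp i) (Real.exp_pos _)
  · have : ∑ i, tilted p μ i = (∑ i, p i * Real.exp (μ i)) * Real.exp (-(freeEnergy p μ)) := by
      rw [Finset.sum_mul]
      refine Finset.sum_congr rfl fun i _ => ?_
      rw [tilted, Real.exp_sub, Real.exp_neg]
      ring
    rw [this, freeEnergy, Real.exp_neg, Real.exp_log hs]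
    field_simp

lemma log_tilted_div {n : ℕ} (p μ : Fin n → ℝ) (hp : ∀ i, 0 < p i) (i : Fin n) :
    Real.log (tilted p μ i / p i) = μ i - freeEnergy p μ := by
  rw [tilted, mul_comm, mul_div_assoc, div_self (hp i).ne', mul_one, Real.log_exp]

lemma gibbs {n : ℕ} (ν q : Fin n → ℝ) (hν : IsPPV ν) (hq : IsPPV q) :
    0 ≤ relEnt ν q := by
  have key : ∀ i, ν i - q i ≤ ν i * Real.log (ν i / q i) := by
    intro i
    have hνi := hν.1 i
    have hqi := hq.1 i
    have h1 : Real.log (q i / ν i) ≤ q i / ν i - 1 :=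
      Real.log_le_sub_one_of_pos (div_pos hqi hνi)
    have h2 : Real.log (ν i / q i) = - Real.log (q i / ν i) := by
      rw [← Real.log_inv, inv_div]
    have h3 : ν i * Real.log (ν i / q i) = ν i * (- Real.log (q i / ν i)) := by rw [h2]
    have h4 : ν i * (q i / ν i - 1) = q i - ν i := by field_simp
    nlinarith [mul_le_mul_of_nonneg_left h1 hνi.le]
  calc 0 = (∑ i, ν i) - ∑ i, q i := by rw [hν.2, hq.2]; ring
    _ = ∑ i, (ν i - q i) := by rw [Finset.sum_sub_distrib]
    _ ≤ ∑ i, ν i * Real.log (ν i / q i) := Finset.sum_le_sum fun i _ => key i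
    _ = relEnt ν q := rfl

lemma relEnt_decomp {n : ℕ} (p μ ν' : Fin n → ℝ) (hp : ∀ i, 0 < p i) (hν' : IsPPV ν') :
    relEnt ν' p = relEnt ν' (tilted p μ) + ∑ i, ν' i * (μ i - freeEnergy p μ) := by
  rw [relEnt, relEnt, ← Finset.sum_add_distrib]
  refine Finset.sum_congr rfl fun i _ => ?_
  have hν'i := hν'.1 i
  have hti : 0 < tilted p μ i := mul_pos (hp i) (Real.exp_pos _)
  have : Real.log (ν' i / p i) = Real.log (ν' i / tilted p μ i) + Real.log (tilted p μ i / p i) := by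
    rw [← Real.log_mul (div_pos hν'i hti).ne' (div_pos hti (hp i)).ne',
      div_mul_div_comm]
    rw [mul_comm (tilted p μ i) (p i), mul_div_mul_right _ _ hti.ne']
  rw [this, log_tilted_div p μ hp i]
  ring

lemma relEnt_self {n : ℕ} (ν : Fin n → ℝ) (hν : IsPPV ν) : relEnt ν ν = 0 := by
  rw [relEnt]
  refine Finset.sum_eq_zero fun i _ => ?_
  rw [div_self (hν.1 i).ne', Real.log_one, mul_zero]

lemma sum_mulVec {n k : ℕ} (X : Matrix (Fin k) (Fin n) ℝ) (α : Fin k → ℝ) (ν : Fin n → ℝ) :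
    ∑ i, ν i * (∑ a, α a * X a i) = ∑ a, α a * X.mulVec ν a := by
  simp only [Finset.mul_sum, Matrix.mulVec, dotProduct]
  rw [Finset.sum_comm]
  refine Finset.sum_congr rfl fun a _ => ?_
  exact Finset.sum_congr rfl fun i _ => by ring

lemma sum_weight {n : ℕ} (p μ ν' : Fin n → ℝ) (hν' : IsPPV ν') :
    ∑ i, ν' i * (μ i - freeEnergy p μ) = (∑ i, ν' i * μ i) - freeEnergy p μ := by
  simp only [mul_sub, Finset.sum_sub_distrib, ← Finset.sum_mul, hν'.2, one_mul]

lemma phi_tilted {n k : ℕ} (hn : 1 ≤ n) (X : Matrix (Fin k) (Fin n) ℝ)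
    (p : Fin n → ℝ) (hp : IsPPV p) (α : Fin k → ℝ) :
    phi X p (X.mulVec (tilted p (fun i => ∑ a, α a * X a i))) =
      relEnt (tilted p (fun i => ∑ a, α a * X a i)) p := by
  set μ : Fin n → ℝ := fun i => ∑ a, α a * X a i with hμ
  set ν := tilted p μ with hν
  have hνP : IsPPV ν := tilted_isPPV hn p μ hp.1
  have hmem : relEnt ν p ∈
      { t : ℝ | ∃ ν' : Fin n → ℝ, IsPPV ν' ∧ X.mulVec ν' = X.mulVec ν ∧ t = relEnt ν' p } :=
    ⟨ν, hνP, rfl, rfl⟩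
  have hlb : ∀ t ∈ { t : ℝ | ∃ ν' : Fin n → ℝ, IsPPV ν' ∧ X.mulVec ν' = X.mulVec ν ∧
      t = relEnt ν' p }, relEnt ν p ≤ t := by
    rintro t ⟨ν', hν', hXν', rfl⟩
    have e1 : relEnt ν' p = relEnt ν' ν + ∑ i, ν' i * (μ i - freeEnergy p μ) :=
      relEnt_decomp p μ ν' hp.1 hν'
    have e2 : relEnt ν p = relEnt ν ν + ∑ i, ν i * (μ i - freeEnergy p μ) :=
      relEnt_decomp p μ ν hp.1 hνP
    have e3 : ∑ i, ν' i * (μ i - freeEnergy p μ) = ∑ i, ν i * (μ i - freeEnergy p μ) := by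
      rw [sum_weight p μ ν' hν', sum_weight p μ ν hνP, hμ]
      rw [sum_mulVec X α ν', sum_mulVec X α ν, hXν']
    have h0 := gibbs ν' ν hν' hνP
    have h00 := relEnt_self ν hνP
    linarith
  exact le_antisymm (csInf_le ⟨relEnt ν p, fun t ht => hlb t ht⟩ hmem)
    (le_csInf ⟨_, hmem⟩ hlb)


/-- Bregman divergence of the contraction equals the KL divergence of the tilted
measures: with `ν_x = p^{Xᵀα}`, `ν_y = p^{Xᵀβ}`, `x = Xν_x`, `y = Xν_y`,
`D_φ(x,y|p) = φ(x|p) − φ(y|p) − βᵀ(x − y) = S(ν_x | ν_y)`. -/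
theorem bregman_contraction_eq_kl
    {n k : ℕ} (hn : 1 ≤ n) (hk : 1 ≤ k)
    (p : Fin n → ℝ) (hp : IsPPV p) (X : Matrix (Fin k) (Fin n) ℝ)
    (α β : Fin k → ℝ)
    (νx νy : Fin n → ℝ)
    (hνx : νx = tilted p (fun i => ∑ a, α a * X a i))
    (hνy : νy = tilted p (fun i => ∑ a, β a * X a i))
    (x y : Fin k → ℝ) (hx : x = X.mulVec νx) (hy : y = X.mulVec νy) :
    phi X p x - phi X p y - (∑ a, β a * (x a - y a)) = relEnt νx νy := by
  set μβ : Fin n → ℝ := fun i => ∑ a, β a * X a i with hμβ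
  have hνxP : IsPPV νx := hνx ▸ tilted_isPPV hn p _ hp.1
  have hνyP : IsPPV νy := hνy ▸ tilted_isPPV hn p _ hp.1
  have hφx : phi X p x = relEnt νx p := by
    rw [hx, hνx]; exact phi_tilted hn X p hp α
  have hφy : phi X p y = relEnt νy p := by
    rw [hy, hνy]; exact phi_tilted hn X p hp β
  have ex : relEnt νx p = relEnt νx νy + ((∑ a, β a * X.mulVec νx a) - freeEnergy p μβ) := by
    rw [relEnt_decomp p μβ νx hp.1 hνxP, ← hνy, sum_weight p μβ νx hνxP, hμβ,
      sum_mulVec X β νx]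
  have ey : relEnt νy p = ((∑ a, β a * X.mulVec νy a) - freeEnergy p μβ) := by
    rw [relEnt_decomp p μβ νy hp.1 hνyP, ← hνy, sum_weight p μβ νy hνyP, hμβ,
      sum_mulVec X β νy, relEnt_self νy hνyP, zero_add]
  have elin : ∑ a, β a * (x a - y a) =
      (∑ a, β a * X.mulVec νx a) - ∑ a, β a * X.mulVec νy a := by
    rw [hx, hy]
    simp [mul_sub, Finset.sum_sub_distrib]
  rw [hφx, hφy, ex, ey, elin]
  ring
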